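/- Fix β̂ > 0. There exist constants c₀ = c₀(β̂) > 0 and c₁ = c₁(β̂) > 0 such that for all N large and all integers q ≥ 2 with q² ≥ c₁ (log N)², the q-th moment of the polymer partition function satisfies E[W_N^q] ≥ exp(c₀ · (q choose 2) · N / log N). -/

import Mathlib

open MeasureTheory ProbabilityTheory

/-- The possible steps `±e_i` of the simple random walk on `ℤ^d`. -/
def srwStep (d : ℕ) (s : Fin d × Bool) : Fin d → ℤ :=
  fun j => if j = s.1 then (if s.2 then 1 else -1) else 0

/-- `srwP d n x` = `P_0(S_n = x)` for simple random walk on `ℤ^d`. -/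
noncomputable def srwP (d : ℕ) : ℕ → (Fin d → ℤ) → ℝ
  | 0, x => if x = 0 then 1 else 0
  | n + 1, x => (∑ s : Fin d × Bool, srwP d n (x - srwStep d s)) / (2 * d)

/-- The expected number of intersections of two independent 2D simple random walks up to
time `N`: `R_N = E_0^{⊗2}[∑_{n=1}^N 1_{S^1_n = S^2_n}] = ∑_{n=1}^N p_{2n}(0)`. -/
noncomputable def Rfun (N : ℕ) : ℝ := ∑ n ∈ Finset.Icc 1 N, srwP 2 (2 * n) 0

/-- The four nearest-neighbour steps of the simple random walk on `ℤ²`. -/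
def step4 : Fin 4 → ℤ × ℤ := ![(1, 0), (-1, 0), (0, 1), (0, -1)]

/-- Position at time `n` of the walk encoded by the step sequence `σ` (started at `0`). -/
def pathPos {N : ℕ} (σ : Fin N → Fin 4) (n : ℕ) : ℤ × ℤ :=
  ∑ k : Fin N, if (k : ℕ) < n then step4 (σ k) else 0

/-- The normalized partition function `W_N` of the 2D directed polymer in the
environment `η`, at inverse temperature `β`. -/
noncomputable def polymerW (N : ℕ) (β : ℝ) (η : ℕ × ℤ × ℤ → ℝ) : ℝ :=
  (∑ σ : Fin N → Fin 4,
      Real.exp ((∑ n ∈ Finset.range N, β * η (n + 1, pathPos σ (n + 1))) - N * β ^ 2 / 2))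
    / 4 ^ N

open Finset
open scoped NNReal

/-!
Keep a single path `σ₀` in `W_N`: all `q` replicas follow it with probability `4^{-Nq}`, and the `N`
space-time sites of a path are distinct, so
`E[W_N^q] ≥ 4^{-Nq} E[exp(q β Σ_{n ≤ N} ω(n, σ₀(n)) - q N β² / 2)]`
`        = 4^{-Nq} exp(β² (q choose 2) N)`.
With `β² = β̂² / R_N` and `R_N ≤ (1 + log N) / 2`, which follows from
`p_{2n}(0) = (binom(2n, n) / 4^n)² ≤ 1 / (2n + 1)`, this energy is at least
`β̂² (q choose 2) N / log N`, and half of it pays the entropy cost `q N log 4` as soon as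
`q ≳ log N / β̂²`.
-/

-- `P(S_n = k)` for simple random walk on `ℤ`: `k = 2j - n` where `j` is the number of up-steps;
-- the guard `-n ≤ k` keeps `Int.toNat` away from negative arguments.
noncomputable def binomWalk (n : ℕ) (k : ℤ) : ℝ :=
  if (n + k) % 2 = 0 ∧ -(n : ℤ) ≤ k then (n.choose ((n + k).toNat / 2) : ℝ) / 2 ^ n else 0

lemma binomWalk_zero (k : ℤ) : binomWalk 0 k = if k = 0 then 1 else 0 := by
  rcases eq_or_ne k 0 with rfl | hk
  · simp [binomWalk]
  rw [if_neg hk, binomWalk]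
  split_ifs with h
  · rw [Nat.choose_eq_zero_of_lt (by omega), Nat.cast_zero, zero_div]
  · rfl

lemma binomWalk_succ (n : ℕ) (k : ℤ) :
    binomWalk (n + 1) k = (binomWalk n (k - 1) + binomWalk n (k + 1)) / 2 := by
  unfold binomWalk
  by_cases h : (n + 1 + k) % 2 = 0 ∧ -(n : ℤ) - 1 ≤ k
  · obtain ⟨hpar, hk⟩ := h
    rcases hk.eq_or_lt with rfl | hk
    · rw [if_pos (by push_cast; omega), if_neg (by omega), if_pos (by omega),
        show ((n + 1 : ℕ) + (-(n : ℤ) - 1)).toNat / 2 = 0 by push_cast; omega,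
        show ((n : ℤ) + (-(n : ℤ) - 1 + 1)).toNat / 2 = 0 by omega]
      simp only [Nat.choose_zero_right]
      push_cast
      ring
    · obtain ⟨m, hm⟩ : ∃ m : ℕ, (n : ℤ) + 1 + k = 2 * ((m : ℤ) + 1) :=
        ⟨((n : ℤ) + 1 + k).toNat / 2 - 1, by omega⟩
      rw [if_pos (by push_cast; omega), if_pos (by omega), if_pos (by omega),
        show ((n + 1 : ℕ) + k : ℤ).toNat / 2 = m + 1 by push_cast; omega,
        show ((n : ℤ) + (k - 1)).toNat / 2 = m by omega,
        show ((n : ℤ) + (k + 1)).toNat / 2 = m + 1 by omega, Nat.choose_succ_succ]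
      push_cast
      ring
  · rw [if_neg (by push_cast; omega), if_neg (by omega), if_neg (by omega)]
    norm_num

lemma binomWalk_two_mul_zero (n : ℕ) : binomWalk (2 * n) 0 = n.centralBinom / 4 ^ n := by
  rw [binomWalk, if_pos (by omega), show ((2 * n : ℕ) + 0 : ℤ).toNat / 2 = n by omega, pow_mul,
    Nat.centralBinom]
  norm_num

-- In the coordinates `x 0 + x 1`, `x 0 - x 1` the planar walk is two independent walks on `ℤ`.
lemma srwP_two_eq_mul_binomWalk (n : ℕ) (x : Fin 2 → ℤ) :
    srwP 2 n x = binomWalk n (x 0 + x 1) * binomWalk n (x 0 - x 1) := by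
  induction n generalizing x with
  | zero =>
    simp only [srwP, binomWalk_zero, ← ite_and, mul_ite, mul_one, mul_zero]
    congr 1
    refine propext ⟨fun h => by simp [h], fun h => ?_⟩
    ext j
    fin_cases j <;> simp <;> omega
  | succ n ih =>
    simp only [srwP, Fintype.sum_prod_type, Fin.sum_univ_two, Fintype.sum_bool, ih]
    simp only [srwStep, Pi.sub_apply]
    norm_num
    rw [binomWalk_succ, binomWalk_succ]
    ring_nf

lemma srwP_two_two_mul_zero (n : ℕ) : srwP 2 (2 * n) 0 = (n.centralBinom / 4 ^ n : ℝ) ^ 2 := by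
  rw [srwP_two_eq_mul_binomWalk]
  simp [binomWalk_two_mul_zero, sq]

lemma Nat.two_mul_add_one_mul_centralBinom_sq_le (n : ℕ) :
    (2 * n + 1) * n.centralBinom ^ 2 ≤ 16 ^ n := by
  induction n with
  | zero => simp
  | succ n ih =>
    refine Nat.le_of_mul_le_mul_left ?_ (by positivity : 0 < (n + 1) ^ 2)
    calc (n + 1) ^ 2 * ((2 * (n + 1) + 1) * (n + 1).centralBinom ^ 2)
        = (2 * n + 3) * ((n + 1) * (n + 1).centralBinom) ^ 2 := by ring
      _ = 4 * (2 * n + 1) * (2 * n + 3) * ((2 * n + 1) * n.centralBinom ^ 2) := by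
        rw [Nat.succ_mul_centralBinom_succ]; ring
      _ ≤ 16 * (n + 1) ^ 2 * 16 ^ n := Nat.mul_le_mul (by nlinarith) ih
      _ = (n + 1) ^ 2 * 16 ^ (n + 1) := by ring

lemma srwP_two_two_mul_zero_le (n : ℕ) : srwP 2 (2 * n) 0 ≤ 1 / (2 * n + 1) := by
  rw [srwP_two_two_mul_zero, div_pow, ← pow_mul, show (4 : ℝ) ^ (n * 2) = 16 ^ n by
    rw [pow_mul']; norm_num, div_le_div_iff₀ (by positivity) (by positivity), one_mul, mul_comm]
  exact_mod_cast Nat.two_mul_add_one_mul_centralBinom_sq_le n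

lemma Rfun_pos {N : ℕ} (hN : 1 ≤ N) : 0 < Rfun N :=
  sum_pos (fun n _ => by rw [srwP_two_two_mul_zero]; have := n.centralBinom_pos; positivity)
    (nonempty_Icc.2 hN)

lemma Rfun_le_one_add_log_div_two (N : ℕ) : Rfun N ≤ (1 + Real.log N) / 2 := by
  calc Rfun N ≤ ∑ n ∈ Icc 1 N, (n : ℝ)⁻¹ / 2 := by
        refine sum_le_sum fun n hn => (srwP_two_two_mul_zero_le n).trans ?_
        have : (1 : ℝ) ≤ n := by exact_mod_cast (mem_Icc.1 hn).1
        exact (one_div_le_one_div_of_le (a := 2 * (n : ℝ)) (by positivity) (by linarith)).trans_eq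
          (by ring)
    _ = harmonic N / 2 := by simp [harmonic_eq_sum_Icc, sum_div]
    _ ≤ (1 + Real.log N) / 2 := by gcongr; exact harmonic_le_one_add_log N

lemma ProbabilityTheory.iIndepFun.mgf_sum_of_map_eq_gaussianReal {ι Ω : Type*}
    [MeasurableSpace Ω] {P : Measure Ω} {X : ι → Ω → ℝ} {μ : ℝ} {v : ℝ≥0}
    (hindep : iIndepFun X P) (hmeas : ∀ i, Measurable (X i))
    (hX : ∀ i, P.map (X i) = gaussianReal μ v) (s : Finset ι) (t : ℝ) :
    mgf (∑ i ∈ s, X i) P t = Real.exp (μ * t + v * t ^ 2 / 2) ^ #s := by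
  rw [hindep.mgf_sum hmeas, prod_congr rfl fun i _ => mgf_gaussianReal (hX i) t, prod_const]

lemma integrable_sum_pow_succ_of_nonneg {ι Ω : Type*} [MeasurableSpace Ω] {P : Measure Ω}
    {s : Finset ι} {f : ι → Ω → ℝ} {n : ℕ} (hf0 : ∀ i ∈ s, ∀ x, 0 ≤ f i x)
    (hmeas : ∀ i ∈ s, AEStronglyMeasurable (f i) P)
    (hint : ∀ i ∈ s, Integrable (fun x => f i x ^ (n + 1)) P) :
    Integrable (fun x => (∑ i ∈ s, f i x) ^ (n + 1)) P := by
  refine ((integrable_finsetSum s hint).const_mul ((#s : ℝ) ^ n)).mono' ?_ (ae_of_all _ fun x => ?_)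
  · exact ((Finset.aestronglyMeasurable_fun_sum s hmeas).pow _)
  · rw [Real.norm_of_nonneg (pow_nonneg (sum_nonneg fun i hi => hf0 i hi x) _)]
    exact pow_sum_le_card_mul_sum_pow (fun i hi => hf0 i hi x) n

section Polymer

variable {N : ℕ}

def pathSite (σ : Fin N → Fin 4) (n : ℕ) : ℕ × ℤ × ℤ := (n + 1, pathPos σ (n + 1))

lemma pathSite_injective (σ : Fin N → Fin 4) : Function.Injective (pathSite σ) :=
  fun _ _ h => by simpa [pathSite] using congrArg Prod.fst h

def pathSites (σ : Fin N → Fin 4) : Finset (ℕ × ℤ × ℤ) := (range N).image (pathSite σ)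

lemma card_pathSites (σ : Fin N → Fin 4) : #(pathSites σ) = N := by
  rw [pathSites, card_image_of_injective _ (pathSite_injective σ), card_range]

noncomputable def pathWeight (β : ℝ) (η : ℕ × ℤ × ℤ → ℝ) (σ : Fin N → Fin 4) : ℝ :=
  Real.exp ((∑ n ∈ range N, β * η (n + 1, pathPos σ (n + 1))) - N * β ^ 2 / 2)

lemma pathWeight_pos (β : ℝ) (η : ℕ × ℤ × ℤ → ℝ) (σ : Fin N → Fin 4) : 0 < pathWeight β η σ :=
  Real.exp_pos _

lemma polymerW_eq_sum_pathWeight (β : ℝ) (η : ℕ × ℤ × ℤ → ℝ) :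
    polymerW N β η = (∑ σ : Fin N → Fin 4, pathWeight β η σ) / 4 ^ N :=
  rfl

lemma pathWeight_pow (β : ℝ) (η : ℕ × ℤ × ℤ → ℝ) (σ : Fin N → Fin 4) (q : ℕ) :
    pathWeight β η σ ^ q =
      Real.exp (-(q * (N * β ^ 2 / 2))) * Real.exp (q * β * ∑ j ∈ pathSites σ, η j) := by
  rw [pathWeight, ← Real.exp_nat_mul, ← Real.exp_add, pathSites,
    sum_image fun _ _ _ _ h => pathSite_injective σ h, ← mul_sum]
  unfold pathSite
  ring_nf

variable {Ω : Type*} [MeasurableSpace Ω] {P : Measure Ω}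
  {ω : ℕ × ℤ × ℤ → Ω → ℝ}

lemma mgf_sum_pathSites (hmeas : ∀ i, Measurable (ω i)) (hindep : iIndepFun ω P)
    (hgauss : ∀ i, P.map (ω i) = gaussianReal 0 1) (σ : Fin N → Fin 4) (t : ℝ) :
    mgf (∑ j ∈ pathSites σ, ω j) P t = Real.exp (t ^ 2 / 2) ^ N := by
  rw [hindep.mgf_sum_of_map_eq_gaussianReal hmeas hgauss, card_pathSites]
  simp

lemma integrable_pathWeight_pow (hmeas : ∀ i, Measurable (ω i)) (hindep : iIndepFun ω P)
    (hgauss : ∀ i, P.map (ω i) = gaussianReal 0 1) (β : ℝ) (σ : Fin N → Fin 4) (q : ℕ) :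
    Integrable (fun x => pathWeight β (fun i => ω i x) σ ^ q) P := by
  have := hindep.isProbabilityMeasure
  have hpos : 0 < mgf (∑ j ∈ pathSites σ, ω j) P (q * β) := by
    rw [mgf_sum_pathSites hmeas hindep hgauss]
    positivity
  simpa [pathWeight_pow] using (mgf_pos_iff.1 hpos).const_mul (Real.exp (-(q * (N * β ^ 2 / 2))))

lemma integral_pathWeight_pow (hmeas : ∀ i, Measurable (ω i)) (hindep : iIndepFun ω P)
    (hgauss : ∀ i, P.map (ω i) = gaussianReal 0 1) (β : ℝ) (σ : Fin N → Fin 4) (q : ℕ) :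
    ∫ x, pathWeight β (fun i => ω i x) σ ^ q ∂P = Real.exp (β ^ 2 * q.choose 2 * N) := by
  have h := mgf_sum_pathSites hmeas hindep hgauss σ (q * β)
  simp only [mgf, Finset.sum_apply] at h
  simp only [pathWeight_pow]
  rw [integral_const_mul, h, ← Real.exp_nat_mul, ← Real.exp_add, Nat.cast_choose_two]
  ring_nf

lemma integrable_polymerW_pow (hmeas : ∀ i, Measurable (ω i)) (hindep : iIndepFun ω P)
    (hgauss : ∀ i, P.map (ω i) = gaussianReal 0 1) (β : ℝ) (q : ℕ) :
    Integrable (fun x => polymerW N β (fun i => ω i x) ^ q) P := by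
  have := hindep.isProbabilityMeasure
  obtain _ | n := q
  · exact integrable_const 1
  simp only [polymerW_eq_sum_pathWeight, div_pow]
  refine (integrable_sum_pow_succ_of_nonneg (fun σ _ x => (pathWeight_pos ..).le) (fun σ _ => ?_)
    (fun σ _ => integrable_pathWeight_pow hmeas hindep hgauss β σ _)).div_const _
  exact Measurable.aestronglyMeasurable (by unfold pathWeight; fun_prop)

lemma integral_polymerW_pow_ge (hmeas : ∀ i, Measurable (ω i)) (hindep : iIndepFun ω P)
    (hgauss : ∀ i, P.map (ω i) = gaussianReal 0 1) (β : ℝ) (q : ℕ) :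
    Real.exp (β ^ 2 * q.choose 2 * N) / 4 ^ (N * q) ≤
      ∫ x, polymerW N β (fun i => ω i x) ^ q ∂P := by
  let σ₀ : Fin N → Fin 4 := fun _ => 0
  have hle : ∀ x, (pathWeight β (fun i => ω i x) σ₀ / 4 ^ N) ^ q ≤
      polymerW N β (fun i => ω i x) ^ q := fun x => by
    rw [polymerW_eq_sum_pathWeight]
    gcongr
    · exact div_nonneg (pathWeight_pos ..).le (by positivity)
    · exact single_le_sum (fun σ _ => (pathWeight_pos β _ σ).le) (mem_univ σ₀)
  calc Real.exp (β ^ 2 * q.choose 2 * N) / 4 ^ (N * q)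
      = ∫ x, (pathWeight β (fun i => ω i x) σ₀ / 4 ^ N) ^ q ∂P := by
        simp only [div_pow, integral_div, integral_pathWeight_pow hmeas hindep hgauss, pow_mul]
    _ ≤ ∫ x, polymerW N β (fun i => ω i x) ^ q ∂P :=
        integral_mono (by simpa only [div_pow] using
          (integrable_pathWeight_pow hmeas hindep hgauss β σ₀ q).div_const _)
          (integrable_polymerW_pow hmeas hindep hgauss β q) hle

end Polymer

lemma entropy_add_half_energy_le_energy {b L R q N : ℝ} (hb : 0 < b) (hR : 0 < R) (hRL : R ≤ L)
    (hq : 2 ≤ q) (hN : 0 ≤ N) (hqL : 8 * Real.log 4 / b * L ≤ q) :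
    b / 2 * (q * (q - 1) / 2) * N / L + N * q * Real.log 4 ≤ b / R * (q * (q - 1) / 2) * N := by
  have hL : 0 < L := hR.trans_le hRL
  have hq1 : 4 * Real.log 4 * L ≤ b * (q - 1) := by
    have : 8 * Real.log 4 / b * b = 8 * Real.log 4 := div_mul_cancel₀ _ hb.ne'
    nlinarith
  have hentropy : N * q * Real.log 4 ≤ b / (2 * L) * (q * (q - 1) / 2) * N := by
    rw [show b / (2 * L) * (q * (q - 1) / 2) * N = b * (q - 1) * (N * q) / (4 * L) by
      field_simp; ring, le_div_iff₀ (by positivity)]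
    nlinarith [mul_le_mul_of_nonneg_right hq1 (by positivity : 0 ≤ N * q)]
  calc b / 2 * (q * (q - 1) / 2) * N / L + N * q * Real.log 4
      ≤ b / (2 * L) * (q * (q - 1) / 2) * N + b / (2 * L) * (q * (q - 1) / 2) * N := by
        rw [show b / 2 * (q * (q - 1) / 2) * N / L = b / (2 * L) * (q * (q - 1) / 2) * N by ring]
        gcongr
    _ = b / L * (q * (q - 1) / 2) * N := by ring
    _ ≤ b / R * (q * (q - 1) / 2) * N := by gcongr; nlinarith

theorem polymer_moment_lower_bound_q_large_general {Ω : Type*} [MeasurableSpace Ω]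
    (P : Measure Ω)
    (ω : ℕ × ℤ × ℤ → Ω → ℝ) (hmeas : ∀ i, Measurable (ω i))
    (hindep : iIndepFun ω P)
    (hgauss : ∀ i, Measure.map (ω i) P = gaussianReal 0 1)
    (βhat : ℝ) (hβhat : 0 < βhat) :
    ∃ c₀ > (0 : ℝ), ∃ c₁ > (0 : ℝ), ∃ N₀ : ℕ, ∀ N : ℕ, N₀ ≤ N → ∀ q : ℕ, 2 ≤ q →
      c₁ * (Real.log N) ^ 2 ≤ (q : ℝ) ^ 2 →
      Real.exp (c₀ * (q.choose 2) * N / Real.log N) ≤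
        ∫ x, (polymerW N (βhat / Real.sqrt (Rfun N)) (fun i => ω i x)) ^ q ∂P := by
  have hlog4 : 0 < Real.log 4 := Real.log_pos (by norm_num)
  refine ⟨βhat ^ 2 / 2, by positivity, (8 * Real.log 4 / βhat ^ 2) ^ 2, by positivity, 3,
    fun N hN q hq hqL => ?_⟩
  have hL : 1 ≤ Real.log N := by
    have : (3 : ℝ) ≤ N := by exact_mod_cast hN
    rw [Real.le_log_iff_exp_le (by positivity)]
    linarith [Real.exp_one_lt_d9]
  have hR : 0 < Rfun N := Rfun_pos (by omega)
  have hq_log : 8 * Real.log 4 / βhat ^ 2 * Real.log N ≤ q :=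
    (pow_le_pow_iff_left₀ (by positivity) (by positivity) two_ne_zero).1 (by rwa [mul_pow])
  refine le_trans ?_ (integral_polymerW_pow_ge hmeas hindep hgauss _ q)
  rw [div_pow, Real.sq_sqrt hR.le, le_div_iff₀ (by positivity),
    ← Real.exp_log (show (0 : ℝ) < 4 ^ (N * q) by positivity), ← Real.exp_add, Real.exp_le_exp,
    Real.log_pow, Nat.cast_choose_two, Nat.cast_mul]
  exact entropy_add_half_energy_le_energy (by positivity) hR
    ((Rfun_le_one_add_log_div_two N).trans (by linarith)) (by exact_mod_cast hq) (by positivity)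
    hq_log

/-- Fix `β̂ > 0`. There exist `c₀ = c₀(β̂) > 0` and `c₁ = c₁(β̂) > 0` such that for all
`N` large and all integers `q ≥ 2` with `q² ≥ c₁ (log N)²`, the `q`-th moment of the
polymer partition function (at `β_N = β̂ / √R_N`, in an i.i.d. standard Gaussian
environment) satisfies `E[W_N^q] ≥ exp(c₀ (q choose 2) N / log N)`. -/
theorem polymer_moment_lower_bound_q_large {Ω : Type*} [MeasurableSpace Ω]
    (P : Measure Ω) [IsProbabilityMeasure P]
    (ω : ℕ × ℤ × ℤ → Ω → ℝ) (hmeas : ∀ i, Measurable (ω i))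
    (hindep : iIndepFun ω P)
    (hgauss : ∀ i, Measure.map (ω i) P = gaussianReal 0 1)
    (βhat : ℝ) (hβhat : 0 < βhat) :
    ∃ c₀ > (0 : ℝ), ∃ c₁ > (0 : ℝ), ∃ N₀ : ℕ, ∀ N : ℕ, N₀ ≤ N → ∀ q : ℕ, 2 ≤ q →
      c₁ * (Real.log N) ^ 2 ≤ (q : ℝ) ^ 2 →
      Real.exp (c₀ * (q.choose 2) * N / Real.log N) ≤
        ∫ x, (polymerW N (βhat / Real.sqrt (Rfun N)) (fun i => ω i x)) ^ q ∂P :=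
  polymer_moment_lower_bound_q_large_general P ω hmeas hindep hgauss βhat hβhat
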